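/- Let θ, ψ₁, ψ₂ be real, let ε_A ∈ [−1/2, 1/2], let α, β be nonnegative reals with α² = 1/2 + ε_A and β² = 1/2 − ε_A, and let Ψ' be the biased shared state α|0⟩|φ₀⟩ + β|1⟩|φ₁⟩. Then the CHSH success probability satisfies S(Ψ') = 1/2 + (1/8) sin θ (sin ψ₁ + sin ψ₂) + (1/4) √(1/4 − ε_A²) (cos ψ₁ − cos ψ₂) + (1/4) ε_A cos θ (cos ψ₁ + cos ψ₂). -/

import Mathlib

open scoped ComplexInnerProductSpace

/-- Tensor product of two qubit vectors, realized in `EuclideanSpace ℂ (Fin 2 × Fin 2)`. -/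
noncomputable def tensor2 (u v : EuclideanSpace ℂ (Fin 2)) :
    EuclideanSpace ℂ (Fin 2 × Fin 2) :=
  WithLp.toLp 2 (fun p : Fin 2 × Fin 2 => u p.1 * v p.2)

/-- Bob's first-qubit measurement vectors: for input `x = 0` the computational basis,
for `x = 1` the Hadamard basis. -/
noncomputable def eVec (x a : Fin 2) : EuclideanSpace ℂ (Fin 2) :=
  if x = 0 then WithLp.toLp 2 (fun i : Fin 2 => if i = a then 1 else 0)
  else WithLp.toLp 2 (fun i : Fin 2 => ((Real.sqrt 2 : ℂ))⁻¹ * (if a = 1 ∧ i = 1 then -1 else 1))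

/-- Second-qubit measurement vectors for angle `ψ`. -/
noncomputable def fVec (ψ : ℝ) (b : Fin 2) : EuclideanSpace ℂ (Fin 2) :=
  if b = 0 then WithLp.toLp 2 (fun i : Fin 2 => if i = 0 then (Real.cos (ψ / 2) : ℂ) else (Real.sin (ψ / 2) : ℂ))
  else WithLp.toLp 2 (fun i : Fin 2 => if i = 0 then -(Real.sin (ψ / 2) : ℂ) else (Real.cos (ψ / 2) : ℂ))

/-- The CHSH success probability of a two-qubit state `Ψ` for measurement angles
`ψ₁` (input `y = 0`) and `ψ₂` (input `y = 1`). -/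
noncomputable def chshS (ψ₁ ψ₂ : ℝ) (Ψ : EuclideanSpace ℂ (Fin 2 × Fin 2)) : ℝ :=
  (1 / 4) * ∑ x : Fin 2, ∑ y : Fin 2, ∑ a : Fin 2, ∑ b : Fin 2,
    if a + b = x * y then
      ‖⟪tensor2 (eVec x a) (fVec (if y = 0 then ψ₁ else ψ₂) b), Ψ⟫‖ ^ 2
    else 0

/-- The biased shared state `α|0⟩|φ₀⟩ + β|1⟩|φ₁⟩`, with
`|φ₀⟩ = cos(θ/2)|0⟩ + sin(θ/2)|1⟩` and `|φ₁⟩ = cos(θ/2)|0⟩ − sin(θ/2)|1⟩`. -/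
noncomputable def biasedState (θ α β : ℝ) : EuclideanSpace ℂ (Fin 2 × Fin 2) :=
  WithLp.toLp 2 (fun p : Fin 2 × Fin 2 => (if p.1 = 0 then (α : ℂ) else (β : ℂ)) *
    (if p.2 = 0 then (Real.cos (θ / 2) : ℂ)
     else if p.1 = 0 then (Real.sin (θ / 2) : ℂ) else -(Real.sin (θ / 2) : ℂ)))

/-! All amplitudes are real. In the computational basis the two winning amplitudes are
`α cos((θ - ψ)/2)` and `-β sin((θ + ψ)/2)`, so the half-angle formulas give
`1/2 + εA cos θ cos ψ + (1/2) sin θ sin ψ`. In the Hadamard basis the dependence on `θ` drops out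
and the outcomes agree with probability `((α + β)² cos²(ψ/2) + (α - β)² sin²(ψ/2)) / 2
= 1/2 + αβ cos ψ`, and disagree with the complementary probability `1/2 - αβ cos ψ`.
Averaging the four input pairs, with `α² - β² = 2 εA` and `αβ = √(1/4 - εA²)`, gives the formula. -/

open ComplexConjugate Real

lemma inner_tensor2 (u v : EuclideanSpace ℂ (Fin 2)) (Ψ : EuclideanSpace ℂ (Fin 2 × Fin 2)) :
    ⟪tensor2 u v, Ψ⟫ = ∑ i, ∑ j, conj (u i) * conj (v j) * Ψ (i, j) := by
  simp [tensor2, PiLp.inner_apply, Fintype.sum_prod_type, mul_comm]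

lemma Real.cos_eq_cos_half_sq_sub_sin_half_sq (x : ℝ) :
    cos x = cos (x / 2) ^ 2 - sin (x / 2) ^ 2 := by
  rw [← cos_two_mul', mul_div_cancel₀ x two_ne_zero]

lemma Real.sin_eq_two_mul_sin_half_mul_cos_half (x : ℝ) :
    sin x = 2 * sin (x / 2) * cos (x / 2) := by
  rw [← sin_two_mul, mul_div_cancel₀ x two_ne_zero]

lemma Real.inv_sqrt_two_sq : (√2)⁻¹ ^ 2 = 2⁻¹ := by
  rw [inv_pow, sq_sqrt zero_le_two]

noncomputable def parityProb (x : Fin 2) (ψ : ℝ) (t : Fin 2)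
    (Ψ : EuclideanSpace ℂ (Fin 2 × Fin 2)) : ℝ :=
  ∑ a : Fin 2, ∑ b : Fin 2, if a + b = t then ‖⟪tensor2 (eVec x a) (fVec ψ b), Ψ⟫‖ ^ 2 else 0

lemma chshS_eq_parityProb (ψ₁ ψ₂ : ℝ) (Ψ : EuclideanSpace ℂ (Fin 2 × Fin 2)) :
    chshS ψ₁ ψ₂ Ψ =
      (parityProb 0 ψ₁ 0 Ψ + parityProb 0 ψ₂ 0 Ψ + parityProb 1 ψ₁ 0 Ψ + parityProb 1 ψ₂ 1 Ψ) / 4 := by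
  simp only [chshS, parityProb, Fin.sum_univ_two, Fin.isValue, Fin.reduceAdd, mul_zero, mul_one,
    ↓reduceIte, one_ne_zero, zero_ne_one, add_zero, zero_add]
  ring

section biasedState

variable (θ α β ψ : ℝ)

lemma parityProb_zero_biasedState :
    parityProb 0 ψ 0 (biasedState θ α β) = (α ^ 2 + β ^ 2) / 2
      + ((α ^ 2 - β ^ 2) * cos θ * cos ψ + (α ^ 2 + β ^ 2) * sin θ * sin ψ) / 2 := by
  simp only [parityProb, inner_tensor2, eVec, fVec, biasedState, Fin.sum_univ_two, Fin.isValue,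
    Fin.reduceAdd, ↓reduceIte, one_ne_zero, zero_ne_one, mul_ite, ite_mul, mul_neg, neg_mul, one_mul,
    zero_mul, add_zero, zero_add, MonoidWithZeroHom.map_ite_one_zero, Complex.conj_ofReal,
    ← Complex.ofReal_neg, ← Complex.ofReal_mul, ← Complex.ofReal_add, Complex.norm_real,
    Real.norm_eq_abs, sq_abs]
  rw [Real.cos_eq_cos_half_sq_sub_sin_half_sq θ, Real.cos_eq_cos_half_sq_sub_sin_half_sq ψ,
    Real.sin_eq_two_mul_sin_half_mul_cos_half θ, Real.sin_eq_two_mul_sin_half_mul_cos_half ψ]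
  linear_combination (α ^ 2 + β ^ 2) / 2 * Real.sin_sq_add_cos_sq (θ / 2)
    + (α ^ 2 + β ^ 2) / 2 * (sin (θ / 2) ^ 2 + cos (θ / 2) ^ 2) * Real.sin_sq_add_cos_sq (ψ / 2)

lemma parityProb_one_zero_biasedState :
    parityProb 1 ψ 0 (biasedState θ α β) = (α ^ 2 + β ^ 2) / 2 + α * β * cos ψ := by
  simp only [parityProb, inner_tensor2, eVec, fVec, biasedState, Fin.sum_univ_two, Fin.isValue,
    Fin.reduceAdd, ↓reduceIte, one_ne_zero, zero_ne_one, and_true, and_false, mul_ite, ite_mul, mul_neg,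
    neg_mul, neg_neg, mul_one, add_zero, zero_add, Complex.conj_ofReal, ← Complex.ofReal_inv,
    ← Complex.ofReal_neg, ← Complex.ofReal_mul, ← Complex.ofReal_add, Complex.norm_real,
    Real.norm_eq_abs, sq_abs]
  rw [Real.cos_eq_cos_half_sq_sub_sin_half_sq ψ]
  linear_combination
    (√2)⁻¹ ^ 2 * ((α + β) ^ 2 * cos (ψ / 2) ^ 2 + (α - β) ^ 2 * sin (ψ / 2) ^ 2)
      * Real.sin_sq_add_cos_sq (θ / 2)
    + ((α + β) ^ 2 * cos (ψ / 2) ^ 2 + (α - β) ^ 2 * sin (ψ / 2) ^ 2) * Real.inv_sqrt_two_sq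
    + (α ^ 2 + β ^ 2) / 2 * Real.sin_sq_add_cos_sq (ψ / 2)

lemma parityProb_one_one_biasedState :
    parityProb 1 ψ 1 (biasedState θ α β) = (α ^ 2 + β ^ 2) / 2 - α * β * cos ψ := by
  simp only [parityProb, inner_tensor2, eVec, fVec, biasedState, Fin.sum_univ_two, Fin.isValue,
    add_eq_right, ↓reduceIte, one_ne_zero, zero_ne_one, and_true, and_false, mul_ite, ite_mul, mul_neg,
    neg_mul, neg_neg, mul_one, add_zero, zero_add, Complex.conj_ofReal, ← Complex.ofReal_inv,
    ← Complex.ofReal_neg, ← Complex.ofReal_mul, ← Complex.ofReal_add, Complex.norm_real,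
    Real.norm_eq_abs, sq_abs]
  rw [Real.cos_eq_cos_half_sq_sub_sin_half_sq ψ]
  linear_combination
    (√2)⁻¹ ^ 2 * ((α + β) ^ 2 * sin (ψ / 2) ^ 2 + (α - β) ^ 2 * cos (ψ / 2) ^ 2)
      * Real.sin_sq_add_cos_sq (θ / 2)
    + ((α + β) ^ 2 * sin (ψ / 2) ^ 2 + (α - β) ^ 2 * cos (ψ / 2) ^ 2) * Real.inv_sqrt_two_sq
    + (α ^ 2 + β ^ 2) / 2 * Real.sin_sq_add_cos_sq (ψ / 2)

end biasedState

theorem stmt_6_general (θ ψ₁ ψ₂ : ℝ) (εA : ℝ)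
    (α β : ℝ) (hα : 0 ≤ α) (hβ : 0 ≤ β)
    (hα2 : α ^ 2 = 1 / 2 + εA) (hβ2 : β ^ 2 = 1 / 2 - εA) :
    chshS ψ₁ ψ₂ (biasedState θ α β) =
      1 / 2 + (1 / 8) * Real.sin θ * (Real.sin ψ₁ + Real.sin ψ₂)
        + (1 / 4) * Real.sqrt (1 / 4 - εA ^ 2) * (Real.cos ψ₁ - Real.cos ψ₂)
        + (1 / 4) * εA * Real.cos θ * (Real.cos ψ₁ + Real.cos ψ₂) := by
  have hsum : α ^ 2 + β ^ 2 = 1 := by rw [hα2, hβ2]; ring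
  have hdiff : α ^ 2 - β ^ 2 = 2 * εA := by rw [hα2, hβ2]; ring
  have hsqrt : Real.sqrt (1 / 4 - εA ^ 2) = α * β := by
    have hsq : (α * β) ^ 2 = 1 / 4 - εA ^ 2 := by rw [mul_pow, hα2, hβ2]; ring
    rw [← hsq, Real.sqrt_sq (mul_nonneg hα hβ)]
  rw [chshS_eq_parityProb, parityProb_zero_biasedState, parityProb_zero_biasedState,
    parityProb_one_zero_biasedState, parityProb_one_one_biasedState, hsum, hdiff, hsqrt]
  ring

theorem stmt_6 (θ ψ₁ ψ₂ : ℝ) (εA : ℝ) (hεA : εA ∈ Set.Icc (-(1 / 2) : ℝ) (1 / 2))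
    (α β : ℝ) (hα : 0 ≤ α) (hβ : 0 ≤ β)
    (hα2 : α ^ 2 = 1 / 2 + εA) (hβ2 : β ^ 2 = 1 / 2 - εA) :
    chshS ψ₁ ψ₂ (biasedState θ α β) =
      1 / 2 + (1 / 8) * Real.sin θ * (Real.sin ψ₁ + Real.sin ψ₂)
        + (1 / 4) * Real.sqrt (1 / 4 - εA ^ 2) * (Real.cos ψ₁ - Real.cos ψ₂)
        + (1 / 4) * εA * Real.cos θ * (Real.cos ψ₁ + Real.cos ψ₂) :=
  stmt_6_general θ ψ₁ ψ₂ εA α β hα hβ hα2 hβ2
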